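/- arXiv:1011.6039 — 3 statements merged into one kernel-verified Lean document; each statement's English description precedes it below -/
import Mathlib

section
/- Suppose the transfer function φ is bounded and continuous. If k < k⁰, i.e. no θ ∈ Θ_k satisfies F_θ(x) = F_{θ⁰}(x) for λ_d-almost every x, then inf_{θ ∈ Θ_k} ∫_{ℝ^d} (F_θ(x) − F_{θ⁰}(x))² q(x) dx > 0. -/
open MeasureTheory ProbabilityTheory Filter

noncomputable section

/-- The parameter space of an MLP with `k` hidden units on inputs in `ℝ^d`:
`θ = (β, a, w)` with `β ∈ ℝ`, `a ∈ ℝ^k` and `w ∈ (ℝ^{d+1})^k`. -/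
abbrev Param (d k : ℕ) : Type := ℝ × (Fin k → ℝ) × (Fin k → (Fin (d + 1) → ℝ))

/-- `wᵀ x̃` where `x̃ = (1, x₁, …, x_d)`. -/
def dotT {d : ℕ} (w : Fin (d + 1) → ℝ) (x : Fin d → ℝ) : ℝ :=
  w 0 + ∑ a : Fin d, w a.succ * x a

/-- The MLP regression function `F_θ(x) = β + ∑ i, aᵢ φ(wᵢᵀ x̃)`. -/
def mlp {d k : ℕ} (φ : ℝ → ℝ) (θ : Param d k) (x : Fin d → ℝ) : ℝ :=
  θ.1 + ∑ i : Fin k, θ.2.1 i * φ (dotT (θ.2.2 i) x)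

/-- The compact parameter set `Θ_k`: `‖wᵢ‖ ≥ η`, `|aᵢ| ≥ η`, `‖θ‖ ≤ M`
(Euclidean norms, written via squares). -/
def Theta (d k : ℕ) (η M : ℝ) : Set (Param d k) :=
  {θ | (∀ i : Fin k, η ^ 2 ≤ ∑ a : Fin (d + 1), (θ.2.2 i a) ^ 2 ∧ η ≤ |θ.2.1 i|) ∧
    θ.1 ^ 2 + (∑ i : Fin k, (θ.2.1 i) ^ 2) +
      ∑ i : Fin k, ∑ a : Fin (d + 1), (θ.2.2 i a) ^ 2 ≤ M ^ 2}

/-- The density of `z = (x,y)` under parameter `θ` (Gaussian regression noise,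
input density `q`): `f_θ(z) = (2πσ²)^{-1/2} exp(-(y - F_θ(x))²/(2σ²)) q(x)`. -/
def fdens {d k : ℕ} (φ : ℝ → ℝ) (q : (Fin d → ℝ) → ℝ) (σ2 : ℝ) (θ : Param d k)
    (z : ((Fin d → ℝ) × ℝ)) : ℝ :=
  (Real.sqrt (2 * Real.pi * σ2))⁻¹ * Real.exp (-(z.2 - mlp φ θ z.1) ^ 2 / (2 * σ2)) * q z.1

/-- The law `q λ_d` of the inputs. -/
def muX (d : ℕ) (q : (Fin d → ℝ) → ℝ) : Measure (Fin d → ℝ) :=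
  volume.withDensity fun x => ENNReal.ofReal (q x)

/-- The law of `Z = (X,Y)` under the true parameter: density `f = f_{θ⁰}` w.r.t. `λ_{d+1}`. -/
def lawZ {d k0 : ℕ} (φ : ℝ → ℝ) (q : (Fin d → ℝ) → ℝ) (σ2 : ℝ) (θ0 : Param d k0) :
    Measure ((Fin d → ℝ) × ℝ) :=
  volume.withDensity fun z => ENNReal.ofReal (fdens φ q σ2 θ0 z)

/-- The linear combination of the functions appearing in assumption H-4:
`c·1 + ∑ᵢ (∑_{a≤b} γᵢab x_a x_b) φ''(wᵢ⁰ᵀx̃) + ∑ᵢ δᵢ φ''(wᵢ⁰ᵀx̃)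
 + ∑ᵢ (∑_a ζᵢa x_a) φ'(wᵢ⁰ᵀx̃) + ∑ᵢ εᵢ φ'(wᵢ⁰ᵀx̃) + ∑ᵢ αᵢ φ(wᵢ⁰ᵀx̃)`. -/
def combo {d k0 : ℕ} (φ : ℝ → ℝ) (w0 : Fin k0 → Fin (d + 1) → ℝ) (c : ℝ)
    (γ : Fin k0 → Fin d → Fin d → ℝ) (δ : Fin k0 → ℝ) (ζ : Fin k0 → Fin d → ℝ)
    (ε : Fin k0 → ℝ) (α : Fin k0 → ℝ) (x : Fin d → ℝ) : ℝ :=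
  c + (∑ i : Fin k0, (∑ a : Fin d, ∑ b : Fin d, if a ≤ b then γ i a b * x a * x b else 0) *
        deriv (deriv φ) (dotT (w0 i) x))
    + (∑ i : Fin k0, δ i * deriv (deriv φ) (dotT (w0 i) x))
    + (∑ i : Fin k0, (∑ a : Fin d, ζ i a * x a) * deriv φ (dotT (w0 i) x))
    + (∑ i : Fin k0, ε i * deriv φ (dotT (w0 i) x))
    + ∑ i : Fin k0, α i * φ (dotT (w0 i) x)

/-!
The functional `θ ↦ ∫ (F_θ - F_θ⁰)² q` is continuous on `Θ_k` by dominated convergence, the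
integrand being bounded by a constant times `q` because `φ` is bounded and `Θ_k` is bounded.
It is positive at every `θ ∈ Θ_k`, since `F_θ ≠ F_θ⁰` on a set of positive Lebesgue measure
and `q > 0`. A positive continuous function on the compact set `Θ_k` is bounded below by a
positive constant.
-/

section WeightedL2

variable {α : Type*} [MeasurableSpace α] {μ : Measure α}

lemma integral_sq_mul_pos {f q : α → ℝ} (hq : ∀ x, 0 < q x)
    (hint : Integrable (fun x => f x ^ 2 * q x) μ) (hf : ¬ f =ᵐ[μ] 0) :
    0 < ∫ x, f x ^ 2 * q x ∂μ := by
  rw [integral_pos_iff_support_of_nonneg (fun x => mul_nonneg (sq_nonneg _) (hq x).le) hint]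
  have hsupp : Function.support f ⊆ Function.support fun x => f x ^ 2 * q x :=
    fun x hx => mul_ne_zero (pow_ne_zero 2 hx) (hq x).ne'
  exact (pos_iff_ne_zero.2 fun h => hf (ae_iff.2 h)).trans_le (measure_mono hsupp)

lemma integrable_sq_mul_of_abs_le {f q : α → ℝ} {C : ℝ} (hf : AEStronglyMeasurable f μ)
    (hfC : ∀ x, |f x| ≤ C) (hq : Integrable q μ) :
    Integrable (fun x => f x ^ 2 * q x) μ :=
  hq.bdd_mul (hf.pow 2) (ae_of_all _ fun x => by
    simpa [Real.norm_eq_abs, sq_abs] using pow_le_pow_left₀ (abs_nonneg _) (hfC x) 2)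

lemma continuousOn_integral_sq_mul {X : Type*} [TopologicalSpace X] [FirstCountableTopology X]
    {f : X → α → ℝ} {s : Set X} {q : α → ℝ} {C : ℝ} (hf_meas : ∀ θ ∈ s, AEStronglyMeasurable (f θ) μ)
    (hfC : ∀ θ ∈ s, ∀ x, |f θ x| ≤ C) (hf_cont : ∀ x, ContinuousOn (fun θ => f θ x) s)
    (hq : Integrable q μ) :
    ContinuousOn (fun θ => ∫ x, f θ x ^ 2 * q x ∂μ) s := by
  refine continuousOn_of_dominated (bound := fun x => C ^ 2 * |q x|)
    (fun θ hθ => ((hf_meas θ hθ).pow 2).mul hq.aestronglyMeasurable)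
    (fun θ hθ => ae_of_all _ fun x => ?_) (hq.abs.const_mul _)
    (ae_of_all _ fun x => ((hf_cont x).pow 2).mul continuousOn_const)
  rw [Real.norm_eq_abs, abs_mul, abs_pow]
  gcongr
  exact hfC θ hθ x

end WeightedL2

section MLP

variable {d k : ℕ} {φ : ℝ → ℝ}

lemma continuous_mlp (hφ : Continuous φ) (θ : Param d k) : Continuous (mlp φ θ) := by
  unfold mlp dotT; fun_prop

lemma continuous_mlp_param (hφ : Continuous φ) (x : Fin d → ℝ) :
    Continuous fun θ : Param d k => mlp φ θ x := by
  unfold mlp dotT; fun_prop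

lemma abs_mlp_le {B : ℝ} (hB : ∀ t, |φ t| ≤ B) (θ : Param d k) (x : Fin d → ℝ) :
    |mlp φ θ x| ≤ |θ.1| + ∑ i, |θ.2.1 i| * B := by
  unfold mlp
  refine (abs_add_le _ _).trans (add_le_add_right ((Finset.abs_sum_le_sum_abs _ _).trans ?_) _)
  gcongr with i
  rw [abs_mul]
  exact mul_le_mul_of_nonneg_left (hB _) (abs_nonneg _)

lemma sq_le_of_mem_Theta {η M : ℝ} {θ : Param d k} (hθ : θ ∈ Theta d k η M) :
    θ.1 ^ 2 ≤ M ^ 2 ∧ (∀ i, θ.2.1 i ^ 2 ≤ M ^ 2) ∧ ∀ i a, θ.2.2 i a ^ 2 ≤ M ^ 2 := by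
  have ha : ∀ i, θ.2.1 i ^ 2 ≤ ∑ j, θ.2.1 j ^ 2 := fun i =>
    Finset.single_le_sum (f := fun j => θ.2.1 j ^ 2) (fun _ _ => sq_nonneg _)
      (Finset.mem_univ i)
  have hw : ∀ i a, θ.2.2 i a ^ 2 ≤ ∑ j, ∑ b, θ.2.2 j b ^ 2 := fun i a =>
    (Finset.single_le_sum (f := fun b => θ.2.2 i b ^ 2) (fun _ _ => sq_nonneg _)
      (Finset.mem_univ a)).trans
    (Finset.single_le_sum (f := fun j => ∑ b, θ.2.2 j b ^ 2)
      (fun _ _ => Finset.sum_nonneg fun _ _ => sq_nonneg _) (Finset.mem_univ i))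
  have ha0 : 0 ≤ ∑ j, θ.2.1 j ^ 2 := Finset.sum_nonneg fun _ _ => sq_nonneg _
  have hw0 : 0 ≤ ∑ j, ∑ b, θ.2.2 j b ^ 2 :=
    Finset.sum_nonneg fun _ _ => Finset.sum_nonneg fun _ _ => sq_nonneg _
  exact ⟨by linarith [hθ.2], fun i => by linarith [hθ.2, sq_nonneg θ.1, ha i],
    fun i a => by linarith [hθ.2, sq_nonneg θ.1, hw i a]⟩

lemma norm_le_of_mem_Theta {η M : ℝ} {θ : Param d k} (hθ : θ ∈ Theta d k η M) :
    ‖θ‖ ≤ |M| := by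
  obtain ⟨hβ, ha, hw⟩ := sq_le_of_mem_Theta hθ
  have hM := abs_nonneg M
  simp only [Prod.norm_def, Real.norm_eq_abs]
  refine max_le (sq_le_sq.1 hβ) (max_le ?_ ?_)
  · exact (pi_norm_le_iff_of_nonneg hM).2 fun i => sq_le_sq.1 (ha i)
  · exact (pi_norm_le_iff_of_nonneg hM).2 fun i =>
      (pi_norm_le_iff_of_nonneg hM).2 fun a => sq_le_sq.1 (hw i a)

lemma isCompact_Theta (d k : ℕ) (η M : ℝ) : IsCompact (Theta d k η M) := by
  refine (isCompact_closedBall (0 : Param d k) |M|).of_isClosed_subset ?_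
    fun θ hθ => mem_closedBall_zero_iff.2 (norm_le_of_mem_Theta hθ)
  simp only [Theta, Set.ofPred_and, Set.ofPred_forall]
  exact (isClosed_iInter fun i => (isClosed_le (by fun_prop) (by fun_prop)).inter
    (isClosed_le (by fun_prop) (by fun_prop))).inter (isClosed_le (by fun_prop) (by fun_prop))

lemma abs_mlp_le_of_mem_Theta {B η M : ℝ} (hB : ∀ t, |φ t| ≤ B) {θ : Param d k}
    (hθ : θ ∈ Theta d k η M) (x : Fin d → ℝ) : |mlp φ θ x| ≤ |M| * (1 + k * B) := by
  obtain ⟨hβ, ha, -⟩ := sq_le_of_mem_Theta hθ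
  have hB0 : 0 ≤ B := (abs_nonneg _).trans (hB 0)
  calc |mlp φ θ x| ≤ |θ.1| + ∑ i, |θ.2.1 i| * B := abs_mlp_le hB θ x
    _ ≤ |M| + ∑ _i : Fin k, |M| * B := add_le_add (sq_le_sq.1 hβ)
      (Finset.sum_le_sum fun i _ => mul_le_mul_of_nonneg_right (sq_le_sq.1 (ha i)) hB0)
    _ = |M| * (1 + k * B) := by
      rw [Finset.sum_const, Finset.card_univ, Fintype.card_fin, nsmul_eq_mul]; ring

end MLP

theorem inf_L2_dist_pos_general (d k k0 : ℕ) (φ : ℝ → ℝ) (η M : ℝ)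
    (hφ_bdd : ∃ B, ∀ t, |φ t| ≤ B) (hφ_cont : Continuous φ)
    (q : (Fin d → ℝ) → ℝ) (hq_meas : Measurable q) (hq_pos : ∀ x, 0 < q x)
    (hq_one : ∫⁻ x, ENNReal.ofReal (q x) = 1)
    (θ0 : Param d k0)
    (hk : ∀ θ ∈ Theta d k η M,
      ¬ (fun x => mlp φ θ x) =ᵐ[(volume : Measure (Fin d → ℝ))] fun x => mlp φ θ0 x) :
    ∃ c > 0, ∀ θ ∈ Theta d k η M,
      c ≤ ∫ x, (mlp φ θ x - mlp φ θ0 x) ^ 2 * q x := by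
  obtain ⟨B, hB⟩ := hφ_bdd
  have hq_int : Integrable q := ⟨hq_meas.aestronglyMeasurable,
    (hasFiniteIntegral_iff_ofReal (ae_of_all _ fun x => (hq_pos x).le)).2 (by simp [hq_one])⟩
  set f : Param d k → (Fin d → ℝ) → ℝ := fun θ x => mlp φ θ x - mlp φ θ0 x
  have hf_meas : ∀ θ, AEStronglyMeasurable (f θ) :=
    fun θ => ((continuous_mlp hφ_cont θ).sub (continuous_mlp hφ_cont θ0)).aestronglyMeasurable
  have hf_bdd : ∀ θ ∈ Theta d k η M, ∀ x,
      |f θ x| ≤ |M| * (1 + k * B) + (|θ0.1| + ∑ i, |θ0.2.1 i| * B) := fun θ hθ x =>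
    (abs_sub _ _).trans (add_le_add (abs_mlp_le_of_mem_Theta hB hθ x) (abs_mlp_le hB θ0 x))
  have hf_ne : ∀ θ ∈ Theta d k η M, ¬ f θ =ᵐ[volume] 0 := fun θ hθ hf =>
    hk θ hθ (hf.mono fun x hx => sub_eq_zero.1 hx)
  exact (isCompact_Theta d k η M).exists_forall_le'
    (continuousOn_integral_sq_mul (fun θ _ => hf_meas θ) hf_bdd
      (fun x => ((continuous_mlp_param hφ_cont x).sub continuous_const).continuousOn) hq_int)
    fun θ hθ => integral_sq_mul_pos hq_pos
      (integrable_sq_mul_of_abs_le (hf_meas θ) (hf_bdd θ hθ) hq_int) (hf_ne θ hθ)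

/-- If `φ` is bounded and continuous and no parameter in `Θ_k` realizes the true regression
function `F_{θ⁰}` λ_d-almost everywhere (i.e. `k < k⁰`), then the `L²(qλ_d)` distance between
`F_θ` and `F_{θ⁰}` is bounded away from `0` on `Θ_k`. -/
theorem inf_L2_dist_pos (d k k0 : ℕ) (φ : ℝ → ℝ) (η M : ℝ) (hη : 0 < η) (hM : 0 < M)
    (hφ_bdd : ∃ B, ∀ t, |φ t| ≤ B) (hφ_cont : Continuous φ)
    (q : (Fin d → ℝ) → ℝ) (hq_meas : Measurable q) (hq_pos : ∀ x, 0 < q x)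
    (hq_one : ∫⁻ x, ENNReal.ofReal (q x) = 1)
    (θ0 : Param d k0) (hθ0 : θ0 ∈ Theta d k0 η M)
    (hk : ∀ θ ∈ Theta d k η M,
      ¬ (fun x => mlp φ θ x) =ᵐ[(volume : Measure (Fin d → ℝ))] fun x => mlp φ θ0 x) :
    ∃ c > 0, ∀ θ ∈ Theta d k η M,
      c ≤ ∫ x, (mlp φ θ x - mlp φ θ0 x) ^ 2 * q x :=
  inf_L2_dist_pos_general d k k0 φ η M hφ_bdd hφ_cont q hq_meas hq_pos hq_one θ0 hk
end
end

section
/- Let μ be a measure, and let f and g be probability densities with respect to μ with f > 0 and g > 0 everywhere, such that g/f − 1 is a nonzero element of L²(f μ). Let s = (g/f − 1)/‖g/f − 1‖₂ where ‖·‖₂ is the L²(f μ) norm, and let s be given by a fixed pointwise representative. Then for any points z₁, …, z_n with Σ_{i=1}^n (min(s(zᵢ), 0))² > 0, the likelihood ratio inequality holds: Σ_{i=1}^n (log g(zᵢ) − log f(zᵢ)) ≤ (Σ_{i=1}^n s(zᵢ))² / (2 Σ_{i=1}^n (min(s(zᵢ), 0))²). -/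
/-!
Write `c` for the normalizing constant, so that `g / f = 1 + c s` pointwise. For `y > -1`,
`log (1 + y) ≤ y - (min y 0)² / 2`, hence the log-likelihood ratio is at most `c S - c² Q / 2`
with `S = ∑ s(zᵢ)` and `Q = ∑ (min (s zᵢ) 0)²`; this quadratic in `c` is at most `S² / (2Q)`.
-/

open MeasureTheory Finset

lemma Real.log_one_sub_le_neg_sub_sq_div_two {x : ℝ} (hx₀ : 0 ≤ x) (hx₁ : x < 1) :
    Real.log (1 - x) ≤ -x - x ^ 2 / 2 := by
  have hsum := Real.hasSum_pow_div_log_of_abs_lt_one (abs_lt.2 ⟨by linarith, hx₁⟩)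
  have := sum_le_hasSum (range 2) (fun n _ => by positivity) hsum
  norm_num [sum_range_succ] at this
  linarith

lemma Real.log_one_add_le_sub_sq_min_div_two {y : ℝ} (hy : -1 < y) :
    Real.log (1 + y) ≤ y - min y 0 ^ 2 / 2 := by
  rcases le_total 0 y with hy₀ | hy₀
  · rw [min_eq_right hy₀]
    linarith [Real.log_le_sub_one_of_pos (x := 1 + y) (by linarith)]
  · rw [min_eq_left hy₀]
    have := Real.log_one_sub_le_neg_sub_sq_div_two (x := -y) (by linarith) (by linarith)
    rw [sub_neg_eq_add, neg_neg, neg_sq] at this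
    exact this

lemma mul_sub_sq_mul_div_two_le (c S : ℝ) {Q : ℝ} (hQ : 0 < Q) :
    c * S - c ^ 2 * Q / 2 ≤ S ^ 2 / (2 * Q) := by
  rw [le_div_iff₀ (by positivity)]
  nlinarith [sq_nonneg (S - c * Q)]

lemma sum_log_one_add_mul_le {ι : Type*} (t : Finset ι) (x : ι → ℝ) {c : ℝ} (hc : 0 ≤ c)
    (hx : ∀ i ∈ t, -1 < c * x i) (hQ : 0 < ∑ i ∈ t, min (x i) 0 ^ 2) :
    ∑ i ∈ t, Real.log (1 + c * x i) ≤
      (∑ i ∈ t, x i) ^ 2 / (2 * ∑ i ∈ t, min (x i) 0 ^ 2) := by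
  have hmin (y : ℝ) : min (c * y) 0 = c * min y 0 := by
    rw [mul_min_of_nonneg _ _ hc, mul_zero]
  calc ∑ i ∈ t, Real.log (1 + c * x i)
      ≤ ∑ i ∈ t, (c * x i - c ^ 2 * min (x i) 0 ^ 2 / 2) := by
        refine sum_le_sum fun i hi => ?_
        have := Real.log_one_add_le_sub_sq_min_div_two (hx i hi)
        rwa [hmin, mul_pow] at this
    _ = c * ∑ i ∈ t, x i - c ^ 2 * (∑ i ∈ t, min (x i) 0 ^ 2) / 2 := by
        rw [sum_sub_distrib, mul_sum, mul_sum, sum_div]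
    _ ≤ _ := mul_sub_sq_mul_div_two_le c _ hQ

theorem likelihood_ratio_inequality_general {α : Type*} [MeasurableSpace α] (μ : Measure α)
    (f g : α → ℝ)
    (hf_pos : ∀ z, 0 < f z) (hg_pos : ∀ z, 0 < g z)
    (s : α → ℝ)
    (hs : s = fun z => (g z / f z - 1) /
      Real.sqrt (∫ t, (g t / f t - 1) ^ 2 ∂(μ.withDensity fun t => ENNReal.ofReal (f t))))
    (n : ℕ) (z : Fin n → α)
    (hpos : 0 < ∑ i : Fin n, (min (s (z i)) 0) ^ 2) :
    ∑ i : Fin n, (Real.log (g (z i)) - Real.log (f (z i))) ≤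
      (∑ i : Fin n, s (z i)) ^ 2 / (2 * ∑ i : Fin n, (min (s (z i)) 0) ^ 2) := by
  set c := Real.sqrt (∫ t, (g t / f t - 1) ^ 2
    ∂(μ.withDensity fun t => ENNReal.ofReal (f t)))
  -- If `c = 0` then `s ≡ 0`, since division by zero gives `0`.
  have hc₀ : c ≠ 0 := by
    rintro hc₀
    simp [hs, hc₀] at hpos
  have hratio (x : α) : g x / f x = 1 + c * s x := by
    rw [hs]
    field_simp
    ring
  have hlog (x : α) : Real.log (g x) - Real.log (f x) = Real.log (1 + c * s x) := by
    rw [← Real.log_div (hg_pos x).ne' (hf_pos x).ne', hratio]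
  simp only [hlog]
  refine sum_log_one_add_mul_le _ _ (Real.sqrt_nonneg _) (fun i _ => ?_) hpos
  linarith [hratio (z i) ▸ div_pos (hg_pos (z i)) (hf_pos (z i))]

/-- Gassiat's deterministic likelihood-ratio inequality.  If `f` and `g` are everywhere
positive probability densities with respect to `μ`, `g/f - 1` is a nonzero element of
`L²(fμ)`, and `s = (g/f - 1)/‖g/f - 1‖₂` is its normalization (given by this fixed pointwise
representative), then for any sample points `z₁, …, z_n` with `∑ (min (s zᵢ) 0)² > 0`,
`∑ (log g(zᵢ) - log f(zᵢ)) ≤ (∑ s(zᵢ))² / (2 ∑ (min (s zᵢ) 0)²)`. -/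
theorem likelihood_ratio_inequality {α : Type*} [MeasurableSpace α] (μ : Measure α)
    (f g : α → ℝ) (hf_meas : Measurable f) (hg_meas : Measurable g)
    (hf_pos : ∀ z, 0 < f z) (hg_pos : ∀ z, 0 < g z)
    (hf_one : ∫⁻ z, ENNReal.ofReal (f z) ∂μ = 1)
    (hg_one : ∫⁻ z, ENNReal.ofReal (g z) ∂μ = 1)
    (hL2 : MemLp (fun z => g z / f z - 1) 2
      (μ.withDensity fun z => ENNReal.ofReal (f z)))
    (hne : ¬ (fun z => g z / f z - 1) =ᵐ[μ.withDensity fun z => ENNReal.ofReal (f z)]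
      (fun _ => (0 : ℝ)))
    (s : α → ℝ)
    (hs : s = fun z => (g z / f z - 1) /
      Real.sqrt (∫ t, (g t / f t - 1) ^ 2 ∂(μ.withDensity fun t => ENNReal.ofReal (f t))))
    (n : ℕ) (z : Fin n → α)
    (hpos : 0 < ∑ i : Fin n, (min (s (z i)) 0) ^ 2) :
    ∑ i : Fin n, (Real.log (g (z i)) - Real.log (f (z i))) ≤
      (∑ i : Fin n, s (z i)) ^ 2 / (2 * ∑ i : Fin n, (min (s (z i)) 0) ^ 2) :=
  likelihood_ratio_inequality_general μ f g hf_pos hg_pos s hs n z hpos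
end

section
/- Let σ(z) = 1/(1 + e^{−z}) be the complex sigmoid function. Let m₁, …, m_k ∈ ℂ \ {0} and b₁, …, b_k ∈ ℂ, set Sᵢ = { ((2n+1)π√(−1) − bᵢ)/mᵢ : n ∈ ℤ }, and assume the sets S₁, …, S_k are pairwise disjoint. Let D = ℂ \ (S₁ ∪ … ∪ S_k). If complex numbers α₀, αᵢ, εᵢ, βᵢ, δᵢ, γᵢ (1 ≤ i ≤ k) satisfy α₀ + Σ_{i=1}^k αᵢ σ(mᵢu + bᵢ) + Σ_{i=1}^k (εᵢ + βᵢ u) σ'(mᵢu + bᵢ) + Σ_{i=1}^k (δᵢ + γᵢ u²) σ''(mᵢu + bᵢ) = 0 for every u ∈ D, then α₀ = 0 and αᵢ = εᵢ = βᵢ = δᵢ = γᵢ = 0 for all 1 ≤ i ≤ k. -/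
/-!
At a point `p ∈ Sᵢ` the function `u ↦ σ(mᵢu + bᵢ)` has a simple pole, `(u - p) σ(mᵢu + bᵢ) → 1/mᵢ`,
while every `σ(mⱼu + bⱼ)` with `j ≠ i` is holomorphic near `p` because the `Sⱼ` are disjoint.
Since `σ' = σ(1 - σ)` and `σ'' = σ(1 - σ)(1 - 2σ)`, the combination is a cubic polynomial in
`σ(mᵢu + bᵢ)` whose coefficients are continuous at `p`; multiplying by `(u - p)^d` and letting
`u → p` isolates the coefficient of degree `d`. Taking `d = 3, 2, 1` in turn, `δᵢ + γᵢp²`,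
`εᵢ + βᵢp` and `αᵢ` vanish at every point of the infinite set `Sᵢ`. Finally `α₀ = 0` by
evaluating at a point of `D`, which is nonempty because `⋃ Sᵢ` is countable.
-/

noncomputable section

def csigmoid (z : ℂ) : ℂ := (1 + Complex.exp (-z))⁻¹

open Complex Filter Topology Finset
open scoped Real

theorem tendsto_sub_mul_inv_of_hasDerivAt {𝕜 : Type*} [NontriviallyNormedField 𝕜]
    {f : 𝕜 → 𝕜} {f' p : 𝕜} (hf : HasDerivAt f f' p) (hf' : f' ≠ 0) (hfp : f p = 0) :
    Tendsto (fun u => (u - p) * (f u)⁻¹) (𝓝[≠] p) (𝓝 f'⁻¹) := by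
  refine ((hasDerivAt_iff_tendsto_slope.mp hf).inv₀ hf').congr fun u => ?_
  rw [slope_def_field, hfp, sub_zero, inv_div, div_eq_mul_inv]

theorem coeff_mul_pow_eq_zero_of_eventually_eq_zero {𝕜 : Type*} [NontriviallyNormedField 𝕜]
    {p τ : 𝕜} {s g : 𝕜 → 𝕜} {a : ℕ → 𝕜 → 𝕜} {d : ℕ} (hd : d ≠ 0)
    (hs : Tendsto (fun u => (u - p) * s u) (𝓝[≠] p) (𝓝 τ))
    (hg : ContinuousAt g p) (ha : ∀ r ≤ d, ContinuousAt (a r) p)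
    (h : ∀ᶠ u in 𝓝[≠] p, g u + ∑ r ∈ range (d + 1), a r u * s u ^ r = 0) :
    a d p * τ ^ d = 0 := by
  have hz : Tendsto (fun u => u - p) (𝓝[≠] p) (𝓝 0) :=
    tendsto_sub_nhds_zero_iff.mpr nhdsWithin_le_nhds
  -- `(u - p)^d * (a r u * s u ^ r) = a r u * (u - p)^(d - r) * ((u - p) * s u)^r`
  have hterm : ∀ r ∈ range (d + 1), Tendsto (fun u => (u - p) ^ d * (a r u * s u ^ r))
      (𝓝[≠] p) (𝓝 (a r p * 0 ^ (d - r) * τ ^ r)) := by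
    intro r hr
    have hrd : r ≤ d := Nat.lt_succ_iff.mp (mem_range.mp hr)
    refine ((((ha r hrd).tendsto.mono_left nhdsWithin_le_nhds).mul (hz.pow (d - r))).mul
      (hs.pow r)).congr fun u => ?_
    rw [← Nat.sub_add_cancel hrd, pow_add, Nat.add_sub_cancel, mul_pow]
    ring
  have hlim := ((hg.tendsto.mono_left nhdsWithin_le_nhds).mul (hz.pow d)).add
    (tendsto_finsetSum _ hterm)
  rw [zero_pow hd, mul_zero, zero_add, sum_eq_single_of_mem d (self_mem_range_succ d)
    fun r hr hrd => by
      rw [zero_pow (by have := mem_range.mp hr; omega), mul_zero, zero_mul],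
    Nat.sub_self, pow_zero, mul_one] at hlim
  refine tendsto_nhds_unique (hlim.congr' ?_) tendsto_const_nhds
  filter_upwards [h] with u hu
  rw [mul_comm (g u), ← mul_sum, ← mul_add, hu, mul_zero]

theorem eq_zero_of_forall_add_mul_add_mul_sq_eq_zero {R : Type*} [CommRing R] [IsDomain R]
    {s : Set R} (hs : s.Infinite) {a b c : R} (h : ∀ x ∈ s, a + b * x + c * x ^ 2 = 0) :
    a = 0 ∧ b = 0 ∧ c = 0 := by
  open Polynomial in
  have hP : C a + C b * X + C c * X ^ 2 = 0 :=
    eq_zero_of_infinite_isRoot _ (hs.mono fun x hx => by simp [h x hx])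
  refine ⟨?_, ?_, ?_⟩
  · simpa using congr_arg (Polynomial.coeff · 0) hP
  · simpa using congr_arg (Polynomial.coeff · 1) hP
  · simpa using congr_arg (Polynomial.coeff · 2) hP

theorem exists_int_eq_iff_one_add_exp_neg_eq_zero {m b u : ℂ} (hm : m ≠ 0) :
    (∃ n : ℤ, u = ((2 * n + 1) * π * I - b) / m) ↔ 1 + exp (-(m * u + b)) = 0 := by
  rw [add_eq_zero_iff_eq_neg', ← exp_pi_mul_I, exp_eq_exp_iff_exists_int]
  constructor
  · rintro ⟨n, rfl⟩
    exact ⟨-n - 1, by field_simp; push_cast; ring⟩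
  · rintro ⟨n, hn⟩
    exact ⟨-n - 1, by field_simp; push_cast; linear_combination -hn⟩

theorem injective_int_pole {m b : ℂ} (hm : m ≠ 0) :
    Function.Injective fun n : ℤ => ((2 * n + 1) * π * I - b) / m := by
  intro n n' h
  have hc : (2 * π * I : ℂ) ≠ 0 := by simp [Real.pi_ne_zero, I_ne_zero]
  have h' : (2 * π * I : ℂ) * n = 2 * π * I * n' := by
    linear_combination (div_left_inj' hm).mp h
  exact_mod_cast mul_left_cancel₀ hc h'

theorem hasDerivAt_csigmoid {z : ℂ} (hz : 1 + exp (-z) ≠ 0) :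
    HasDerivAt csigmoid (csigmoid z * (1 - csigmoid z)) z := by
  have h : HasDerivAt csigmoid (-(exp (-z) * -1) / (1 + exp (-z)) ^ 2) z :=
    (((hasDerivAt_neg z).cexp).const_add 1).inv hz
  refine h.congr_deriv ?_
  unfold csigmoid
  field_simp
  ring

theorem continuousAt_csigmoid {z : ℂ} (hz : 1 + exp (-z) ≠ 0) : ContinuousAt csigmoid z :=
  (hasDerivAt_csigmoid hz).continuousAt

theorem deriv_csigmoid {z : ℂ} (hz : 1 + exp (-z) ≠ 0) :
    deriv csigmoid z = csigmoid z * (1 - csigmoid z) :=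
  (hasDerivAt_csigmoid hz).deriv

theorem deriv_deriv_csigmoid {z : ℂ} (hz : 1 + exp (-z) ≠ 0) :
    deriv (deriv csigmoid) z = csigmoid z * (1 - csigmoid z) * (1 - 2 * csigmoid z) := by
  have hopen : IsOpen {w : ℂ | 1 + exp (-w) ≠ 0} := isOpen_ne_fun (by fun_prop) continuous_const
  have heq : deriv csigmoid =ᶠ[𝓝 z] fun w => csigmoid w * (1 - csigmoid w) :=
    eventually_of_mem (hopen.mem_nhds hz) fun w hw => deriv_csigmoid hw
  have hσ := hasDerivAt_csigmoid hz
  rw [heq.deriv_eq]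
  exact (hσ.mul (hσ.const_sub 1)).deriv.trans (by ring)

theorem tendsto_sub_mul_csigmoid_affine {m b p : ℂ} (hm : m ≠ 0)
    (hp : 1 + exp (-(m * p + b)) = 0) :
    Tendsto (fun u => (u - p) * csigmoid (m * u + b)) (𝓝[≠] p) (𝓝 m⁻¹) := by
  have hf : HasDerivAt (fun u => 1 + exp (-(m * u + b))) m p := by
    have h : HasDerivAt (fun u => 1 + exp (-(m * u + b))) (exp (-(m * p + b)) * -(m * 1)) p :=
      ((((hasDerivAt_id p).const_mul m).add_const b).neg.cexp).const_add 1
    exact h.congr_deriv (by linear_combination -m * hp)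
  exact tendsto_sub_mul_inv_of_hasDerivAt hf hm hp

/-- The coefficients of `a σ + c₁ σ' + c₂ σ''` as a polynomial in `σ`, from `σ' = σ(1 - σ)` and
`σ'' = σ(1 - σ)(1 - 2σ)`. -/
def sigmoidPolyCoeff {R : Type*} [CommRing R] (a c₁ c₂ : R) : ℕ → R
  | 1 => a + c₁ + c₂
  | 2 => -c₁ - 3 * c₂
  | 3 => 2 * c₂
  | _ => 0

theorem sigmoidPolyCoeff_eq_zero {R : Type*} [CommRing R] (a c₁ c₂ : R) {r : ℕ} (hr : 3 < r) :
    sigmoidPolyCoeff a c₁ c₂ r = 0 := by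
  obtain ⟨r, rfl⟩ : ∃ r', r = r' + 4 := ⟨r - 4, by omega⟩
  rfl

theorem continuous_sigmoidPolyCoeff {a : ℂ} {c₁ c₂ : ℂ → ℂ} (h₁ : Continuous c₁)
    (h₂ : Continuous c₂) (r : ℕ) : Continuous fun u => sigmoidPolyCoeff a (c₁ u) (c₂ u) r := by
  rcases r with _ | _ | _ | _ | r <;> simp only [sigmoidPolyCoeff] <;> fun_prop

theorem csigmoid_combination_eq_sum_sigmoidPolyCoeff {z : ℂ} (hz : 1 + exp (-z) ≠ 0)
    (a c₁ c₂ : ℂ) :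
    a * csigmoid z + c₁ * deriv csigmoid z + c₂ * deriv (deriv csigmoid) z =
      ∑ r ∈ range 4, sigmoidPolyCoeff a c₁ c₂ r * csigmoid z ^ r := by
  simp only [deriv_csigmoid hz, deriv_deriv_csigmoid hz, sum_range_succ, sum_range_zero,
    sigmoidPolyCoeff]
  ring

section Poles

variable {k : ℕ} {m b : Fin k → ℂ} {S : Fin k → Set ℂ}

theorem eventually_notMem_iUnion_of_mem (hm : ∀ i, m i ≠ 0)
    (hS : ∀ i, S i = {u | 1 + exp (-(m i * u + b i)) = 0})
    (hdisj : ∀ i j, i ≠ j → Disjoint (S i) (S j)) {i : Fin k} {p : ℂ} (hp : p ∈ S i) :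
    ∀ᶠ u in 𝓝[≠] p, u ∈ (⋃ j, S j)ᶜ := by
  simp only [Set.compl_iUnion, Set.mem_iInter]
  refine eventually_all.mpr fun j => ?_
  rcases eq_or_ne j i with rfl | hji
  · rw [hS j] at hp
    -- on `S j` itself `csigmoid (m j * u + b j)` is the junk value `0⁻¹ = 0`
    filter_upwards [(tendsto_sub_mul_csigmoid_affine (hm j) hp).eventually_ne
      (inv_ne_zero (hm j))] with u hu hmem
    rw [hS j] at hmem
    have h0 : 1 + exp (-(m j * u + b j)) = 0 := hmem
    exact hu (by simp only [csigmoid, h0, inv_zero, mul_zero])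
  · have hclosed : IsClosed (S j) := hS j ▸ isClosed_eq (by fun_prop) continuous_const
    exact mem_nhdsWithin_of_mem_nhds (hclosed.isOpen_compl.mem_nhds
      (Set.disjoint_left.mp (hdisj i j hji.symm) hp))

theorem coeff_eq_zero_of_sum_pow_csigmoid_eq_zero (hm : ∀ i, m i ≠ 0)
    (hS : ∀ i, S i = {u | 1 + exp (-(m i * u + b i)) = 0})
    (hdisj : ∀ i j, i ≠ j → Disjoint (S i) (S j)) {c : ℂ} {A : Fin k → ℕ → ℂ → ℂ}
    (hA : ∀ j r, Continuous (A j r)) {N d : ℕ} (hd : d ≠ 0) (hdN : d < N)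
    (h : ∀ u ∈ (⋃ j, S j)ᶜ, c + ∑ j, ∑ r ∈ range N, A j r u * csigmoid (m j * u + b j) ^ r = 0)
    {i : Fin k} (hhigh : ∀ r, d < r → A i r = 0) {p : ℂ} (hp : p ∈ S i) :
    A i d p = 0 := by
  set g : ℂ → ℂ := fun u =>
    c + ∑ j ∈ univ.erase i, ∑ r ∈ range N, A j r u * csigmoid (m j * u + b j) ^ r
  have hg : ContinuousAt g p := by
    refine continuousAt_const.add (tendsto_finsetSum _ fun j hj =>
      tendsto_finsetSum _ fun r _ => (hA j r).continuousAt.mul (ContinuousAt.pow ?_ r))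
    refine (continuousAt_csigmoid fun hpj => ?_).comp (by fun_prop)
    exact Set.disjoint_left.mp (hdisj i j (ne_of_mem_erase hj).symm) hp (by rw [hS j]; exact hpj)
  have hsplit : ∀ u, c + ∑ j, ∑ r ∈ range N, A j r u * csigmoid (m j * u + b j) ^ r =
      g u + ∑ r ∈ range (d + 1), A i r u * csigmoid (m i * u + b i) ^ r := by
    intro u
    rw [← add_sum_erase _ _ (mem_univ i), sum_subset (range_subset_range.mpr hdN)
      fun r _ hrd => by simp [hhigh r (by simpa using hrd)]]
    ring
  have hpi : 1 + exp (-(m i * p + b i)) = 0 := by rw [hS i] at hp; exact hp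
  have key := coeff_mul_pow_eq_zero_of_eventually_eq_zero hd
    (tendsto_sub_mul_csigmoid_affine (hm i) hpi) hg (fun r _ => (hA i r).continuousAt)
    (by filter_upwards [eventually_notMem_iUnion_of_mem hm hS hdisj hp] with u hu
        rw [← hsplit]; exact h u hu)
  simpa [hm i] using key

theorem eq_zero_of_sum_sigmoidPolyCoeff_eq_zero (hm : ∀ i, m i ≠ 0)
    (hS : ∀ i, S i = {u | 1 + exp (-(m i * u + b i)) = 0})
    (hdisj : ∀ i j, i ≠ j → Disjoint (S i) (S j)) {c : ℂ} {α ε β δ γ : Fin k → ℂ}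
    (h : ∀ u ∈ (⋃ j, S j)ᶜ, c + ∑ j, ∑ r ∈ range 4,
      sigmoidPolyCoeff (α j) (ε j + β j * u) (δ j + γ j * u ^ 2) r *
        csigmoid (m j * u + b j) ^ r = 0)
    {i : Fin k} (hinf : (S i).Infinite) :
    α i = 0 ∧ ε i = 0 ∧ β i = 0 ∧ δ i = 0 ∧ γ i = 0 := by
  have hcoeff {d : ℕ} (hd : d ≠ 0) (hd4 : d < 4) (hhigh : ∀ r, d < r → ∀ u : ℂ,
      sigmoidPolyCoeff (α i) (ε i + β i * u) (δ i + γ i * u ^ 2) r = 0) {p : ℂ} (hp : p ∈ S i) :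
      sigmoidPolyCoeff (α i) (ε i + β i * p) (δ i + γ i * p ^ 2) d = 0 :=
    coeff_eq_zero_of_sum_pow_csigmoid_eq_zero hm hS hdisj
      (fun j r => continuous_sigmoidPolyCoeff (by fun_prop) (by fun_prop) r) hd hd4 h
      (fun r hr => funext (hhigh r hr)) hp
  obtain ⟨hδ, -, hγ⟩ := eq_zero_of_forall_add_mul_add_mul_sq_eq_zero hinf
    (a := δ i) (b := 0) (c := γ i) fun p hp => by
      have h3 := hcoeff (d := 3) (by norm_num) (by norm_num)
        (fun r hr _ => sigmoidPolyCoeff_eq_zero _ _ _ hr) hp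
      simp only [sigmoidPolyCoeff] at h3
      linear_combination h3 / 2
  have hhigh₂ : ∀ r, 2 < r → ∀ u : ℂ,
      sigmoidPolyCoeff (α i) (ε i + β i * u) (δ i + γ i * u ^ 2) r = 0 := fun r hr u => by
    rcases (show r = 3 ∨ 3 < r by omega) with rfl | hr
    · simp [sigmoidPolyCoeff, hδ, hγ]
    · exact sigmoidPolyCoeff_eq_zero _ _ _ hr
  obtain ⟨hε, hβ, -⟩ := eq_zero_of_forall_add_mul_add_mul_sq_eq_zero hinf
    (a := ε i) (b := β i) (c := 0) fun p hp => by
      have h2 := hcoeff (d := 2) (by norm_num) (by norm_num) hhigh₂ hp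
      simp only [sigmoidPolyCoeff, hδ, hγ] at h2
      linear_combination -h2
  have hhigh₁ : ∀ r, 1 < r → ∀ u : ℂ,
      sigmoidPolyCoeff (α i) (ε i + β i * u) (δ i + γ i * u ^ 2) r = 0 := fun r hr u => by
    rcases (show r = 2 ∨ 2 < r by omega) with rfl | hr
    · simp [sigmoidPolyCoeff, hδ, hγ, hε, hβ]
    · exact hhigh₂ r hr u
  obtain ⟨p, hp⟩ := hinf.nonempty
  have h1 := hcoeff (d := 1) (by norm_num) (by norm_num) hhigh₁ hp
  simp only [sigmoidPolyCoeff, hδ, hγ, hε, hβ] at h1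
  exact ⟨by simpa using h1, hε, hβ, hδ, hγ⟩

end Poles

/-- If `m₁, …, m_k ≠ 0`, `Sᵢ = {((2n+1)π√-1 - bᵢ)/mᵢ : n ∈ ℤ}` are pairwise disjoint, and a
linear combination `α₀ + ∑ αᵢ σ(mᵢu + bᵢ) + ∑ (εᵢ + βᵢu) σ'(mᵢu + bᵢ)
+ ∑ (δᵢ + γᵢu²) σ''(mᵢu + bᵢ)` vanishes on `D = ℂ \ (S₁ ∪ ⋯ ∪ S_k)`, then all the
coefficients vanish. -/
theorem csigmoid_combination_eq_zero (k : ℕ) (m b : Fin k → ℂ) (hm : ∀ i, m i ≠ 0)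
    (S : Fin k → Set ℂ)
    (hS : ∀ i, S i =
      {z : ℂ | ∃ n : ℤ, z = ((2 * (n : ℂ) + 1) * Real.pi * Complex.I - b i) / m i})
    (hdisj : ∀ i j, i ≠ j → Disjoint (S i) (S j))
    (α₀ : ℂ) (α ε β δ γ : Fin k → ℂ)
    (h : ∀ u ∈ (⋃ i, S i)ᶜ,
      α₀ + (∑ i : Fin k, α i * csigmoid (m i * u + b i))
        + (∑ i : Fin k, (ε i + β i * u) * deriv csigmoid (m i * u + b i))
        + (∑ i : Fin k, (δ i + γ i * u ^ 2) * deriv (deriv csigmoid) (m i * u + b i)) = 0) :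
    α₀ = 0 ∧ ∀ i, α i = 0 ∧ ε i = 0 ∧ β i = 0 ∧ δ i = 0 ∧ γ i = 0 := by
  have hS_exp : ∀ i, S i = {u | 1 + exp (-(m i * u + b i)) = 0} := fun i => by
    rw [hS i]
    exact Set.ext fun u => exists_int_eq_iff_one_add_exp_neg_eq_zero (hm i)
  have hS_range : ∀ i, S i = Set.range fun n : ℤ => ((2 * n + 1) * π * I - b i) / m i :=
    fun i => by rw [hS i]; ext; simp [eq_comm]
  have hpoly : ∀ u ∈ (⋃ j, S j)ᶜ, α₀ + ∑ j, ∑ r ∈ range 4,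
      sigmoidPolyCoeff (α j) (ε j + β j * u) (δ j + γ j * u ^ 2) r *
        csigmoid (m j * u + b j) ^ r = 0 := by
    intro u hu
    have hreg : ∀ j, 1 + exp (-(m j * u + b j)) ≠ 0 := fun j h0 =>
      hu (Set.mem_iUnion.mpr ⟨j, by rw [hS_exp j]; exact h0⟩)
    simp only [← csigmoid_combination_eq_sum_sigmoidPolyCoeff (hreg _), sum_add_distrib,
      ← add_assoc, h u hu]
  have hcoeff i := eq_zero_of_sum_sigmoidPolyCoeff_eq_zero hm hS_exp hdisj hpoly
    (hS_range i ▸ Set.infinite_range_of_injective (injective_int_pole (hm i)))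
  have hcount : (⋃ j, S j).Countable :=
    Set.countable_iUnion fun j => hS_range j ▸ Set.countable_range _
  obtain ⟨u₀, hu₀⟩ := (hcount.dense_compl ℂ).nonempty
  refine ⟨?_, hcoeff⟩
  simpa [hcoeff] using h u₀ hu₀

end
end
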